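/- arXiv:2601.11548 — 2 statements merged into one kernel-verified Lean document; each statement's English description precedes it below -/
import Mathlib

section
/- Let S ⊂ ℝ^d be a nonempty compact convex set with diameter D, let f : ℝ^d → ℝ have L-Lipschitz gradient on S with G := sup_{x∈S} ‖∇f(x)‖ < ∞, let C ≥ max{L D², G D}, and suppose g_δ(x^k) satisfies |⟨∇f(x^k) − g_δ(x^k), s − x^k⟩| ≤ δ ‖∇f(x^k)‖ for all s ∈ S. Set s^k ∈ argmin_{s ∈ S} ⟨g_δ(x^k), s − x^k⟩, G̃(x^k) = ⟨g_δ(x^k), x^k − s^k⟩, ᾱ_k = max{G̃(x^k) − δ‖∇f(x^k)‖, 0}/C, and x^{k+1} = x^k + ᾱ_k (s^k − x^k). Then f(x^{k+1}) ≤ f(x^k) − (max{G̃(x^k) − δ‖∇f(x^k)‖, 0})² / (2C). -/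
/-!
Along the segment from `x` to `s ∈ S`, the descent lemma
`f y ≤ f x + ⟪∇f x, y - x⟫ + L/2 ‖y - x‖²` (the function
`t ↦ f (x + t v) - t ⟪∇f x, v⟫ - L/2 t² ‖v‖²` has nonpositive derivative on `[0, 1]`) bounds `f` by
a quadratic in the step `α`. The oracle error makes `A = G̃(x) - δ‖∇f x‖` a lower bound for the
true gap `⟪∇f x, x - s⟫ ≤ G D`, and `C ≥ max (L D²) (G D)` then makes `α = A / C` an admissible
step at which that quadratic lies `A² / (2C)` below `f x`.
-/

open RealInnerProductSpace Bornology Metric Set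

section

variable {E : Type*} [NormedAddCommGroup E] [InnerProductSpace ℝ E] [CompleteSpace E]
  {f : E → ℝ} {S : Set E} {L : ℝ}

theorem DifferentiableAt.hasDerivAt_comp_add_smul {x v : E} {t : ℝ}
    (hf : DifferentiableAt ℝ f (x + t • v)) :
    HasDerivAt (fun τ : ℝ => f (x + τ • v)) ⟪gradient f (x + t • v), v⟫ t := by
  have hline : HasDerivAt (fun τ : ℝ => x + τ • v) v t := by
    simpa using ((hasDerivAt_id t).smul_const v).const_add x
  have := (hasGradientAt_iff_hasFDerivAt.1 hf.hasGradientAt).comp_hasDerivAt t hline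
  rwa [InnerProductSpace.toDual_apply_apply] at this

theorem inner_gradient_add_smul_sub_le
    (hLip : ∀ x ∈ S, ∀ y ∈ S, ‖gradient f x - gradient f y‖ ≤ L * ‖x - y‖)
    {x v : E} {t : ℝ} (ht : 0 ≤ t) (hx : x ∈ S) (hxt : x + t • v ∈ S) :
    ⟪gradient f (x + t • v) - gradient f x, v⟫ ≤ L * t * ‖v‖ ^ 2 :=
  calc ⟪gradient f (x + t • v) - gradient f x, v⟫
      ≤ ‖gradient f (x + t • v) - gradient f x‖ * ‖v‖ := real_inner_le_norm _ _
    _ ≤ L * ‖t • v‖ * ‖v‖ := by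
        gcongr
        simpa using hLip _ hxt _ hx
    _ = L * t * ‖v‖ ^ 2 := by rw [norm_smul, Real.norm_of_nonneg ht]; ring

theorem Convex.le_add_inner_gradient_add_of_lipschitz_gradient (hS : Convex ℝ S)
    (hdiff : ∀ x ∈ S, DifferentiableAt ℝ f x)
    (hLip : ∀ x ∈ S, ∀ y ∈ S, ‖gradient f x - gradient f y‖ ≤ L * ‖x - y‖) {x y : E}
    (hx : x ∈ S) (hy : y ∈ S) :
    f y ≤ f x + ⟪gradient f x, y - x⟫ + L / 2 * ‖y - x‖ ^ 2 := by
  set v := y - x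
  have hseg : ∀ t ∈ Icc (0 : ℝ) 1, x + t • v ∈ S := fun t ht => hS.add_smul_sub_mem hx hy ht
  set φ : ℝ → ℝ := fun t => f (x + t • v) - t * ⟪gradient f x, v⟫ - L / 2 * t ^ 2 * ‖v‖ ^ 2
  have hφ : ∀ t ∈ Icc (0 : ℝ) 1,
      HasDerivAt φ (⟪gradient f (x + t • v), v⟫ - ⟪gradient f x, v⟫ - L * t * ‖v‖ ^ 2) t :=
    fun t ht =>
    (((hdiff _ (hseg t ht)).hasDerivAt_comp_add_smul.sub
      ((hasDerivAt_id t).mul_const ⟪gradient f x, v⟫)).sub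
      (((hasDerivAt_pow 2 t).const_mul (L / 2)).mul_const (‖v‖ ^ 2))).congr_deriv (by
        simp only [one_mul, Nat.cast_ofNat]; ring)
  have hanti : AntitoneOn φ (Icc 0 1) := by
    refine antitoneOn_of_hasDerivWithinAt_nonpos (convex_Icc 0 1)
      (fun t ht => (hφ t ht).continuousAt.continuousWithinAt)
      (fun t ht => (hφ t (interior_subset ht)).hasDerivWithinAt) fun t ht => ?_
    rw [interior_Icc] at ht
    have := inner_gradient_add_smul_sub_le hLip ht.1.le hx (hseg t (Ioo_subset_Icc_self ht))
    rw [inner_sub_left] at this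
    linarith
  have := hanti (left_mem_Icc.2 zero_le_one) (right_mem_Icc.2 zero_le_one) zero_le_one
  simp only [φ, v, zero_smul, add_zero, one_smul, add_sub_cancel] at this
  linarith

theorem Convex.apply_add_smul_sub_le_sub_sq_div (hS : Convex ℝ S)
    (hdiff : ∀ x ∈ S, DifferentiableAt ℝ f x)
    (hLip : ∀ x ∈ S, ∀ y ∈ S, ‖gradient f x - gradient f y‖ ≤ L * ‖x - y‖) {x s : E}
    (hx : x ∈ S) (hs : s ∈ S) {A C : ℝ} (hA : 0 ≤ A) (hAC : A ≤ C) (hC : 0 < C)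
    (hgap : A ≤ ⟪gradient f x, x - s⟫) (hLC : L * ‖s - x‖ ^ 2 ≤ C) :
    f (x + (A / C) • (s - x)) ≤ f x - A ^ 2 / (2 * C) := by
  set α := A / C
  have hα : α ∈ Icc (0 : ℝ) 1 := ⟨div_nonneg hA hC.le, (div_le_one hC).2 hAC⟩
  have hdesc := hS.le_add_inner_gradient_add_of_lipschitz_gradient hdiff hLip hx
    (hS.add_smul_sub_mem hx hs hα)
  have hinner : ⟪gradient f x, α • (s - x)⟫ = -(α * ⟪gradient f x, x - s⟫) := by
    rw [real_inner_smul_right, ← neg_sub x s, inner_neg_right, mul_neg]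
  rw [add_sub_cancel_left, hinner, norm_smul, Real.norm_of_nonneg hα.1, mul_pow] at hdesc
  have hαC : α ^ 2 * C = α * A := by rw [sq, mul_assoc, div_mul_cancel₀ A hC.ne']
  have hαA : α * A = 2 * (A ^ 2 / (2 * C)) := by simp only [α]; field_simp
  linarith [mul_le_mul_of_nonneg_left hgap hα.1, mul_le_mul_of_nonneg_left hLC (sq_nonneg α)]

theorem norm_le_sSup_image_norm_gradient (hS : IsBounded S)
    (hLip : ∀ x ∈ S, ∀ y ∈ S, ‖gradient f x - gradient f y‖ ≤ L * ‖x - y‖) {x : E} (hx : x ∈ S) :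
    ‖gradient f x‖ ≤ sSup ((fun z => ‖gradient f z‖) '' S) := by
  have hbdd : IsBounded (gradient f '' S) := isBounded_image_iff.2
    ⟨max L 0 * diam S, fun a ha b hb => calc
      dist (gradient f a) (gradient f b) ≤ L * dist a b := by
        simpa only [dist_eq_norm] using hLip a ha b hb
      _ ≤ max L 0 * diam S :=
        mul_le_mul (le_max_left _ _) (dist_le_diam_of_mem hS ha hb) dist_nonneg (le_max_right _ _)⟩
  obtain ⟨R, hR⟩ := hbdd.exists_norm_le
  exact le_csSup ⟨R, by rintro _ ⟨z, hz, rfl⟩; exact hR _ (mem_image_of_mem _ hz)⟩ ⟨x, hx, rfl⟩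

end

theorem relative_delta_oracle_one_step_decrease_general {d : ℕ}
    (S : Set (EuclideanSpace ℝ (Fin d)))
    (hScomp : IsCompact S) (hSconv : Convex ℝ S)
    (f : EuclideanSpace ℝ (Fin d) → ℝ) (L C δ : ℝ)
    (hdiff : ∀ x ∈ S, DifferentiableAt ℝ f x)
    (hLip : ∀ x ∈ S, ∀ y ∈ S, ‖gradient f x - gradient f y‖ ≤ L * ‖x - y‖)
    (hC : C ≥ max (L * (Metric.diam S) ^ 2)
      (sSup ((fun x => ‖gradient f x‖) '' S) * Metric.diam S))
    (x s : EuclideanSpace ℝ (Fin d)) (hx : x ∈ S) (hs : s ∈ S)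
    (g : EuclideanSpace ℝ (Fin d))
    (horacle : ∀ t ∈ S, |⟪gradient f x - g, t - x⟫| ≤ δ * ‖gradient f x‖) :
    f (x + (max (⟪g, x - s⟫ - δ * ‖gradient f x‖) 0 / C) • (s - x)) ≤
      f x - (max (⟪g, x - s⟫ - δ * ‖gradient f x‖) 0) ^ 2 / (2 * C) := by
  set A := ⟪g, x - s⟫ - δ * ‖gradient f x‖
  rcases le_or_gt A 0 with hA | hA
  · simp [max_eq_right hA]
  rw [max_eq_left hA.le]
  have hgap : A ≤ ⟪gradient f x, x - s⟫ := by
    have h := (abs_le.1 (horacle s hs)).2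
    rw [← neg_sub x s, inner_neg_right, inner_sub_left] at h
    linarith
  have hdist : ‖s - x‖ ≤ diam S := by
    rw [← dist_eq_norm]; exact dist_le_diam_of_mem hScomp.isBounded hs hx
  have hG := norm_le_sSup_image_norm_gradient hScomp.isBounded hLip hx
  have hAC : A ≤ C := calc
    A ≤ ⟪gradient f x, x - s⟫ := hgap
    _ ≤ ‖gradient f x‖ * ‖s - x‖ := by rw [norm_sub_rev]; exact real_inner_le_norm _ _
    _ ≤ sSup ((fun x => ‖gradient f x‖) '' S) * diam S := by
      gcongr
      exact (norm_nonneg _).trans hG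
    _ ≤ C := le_trans (le_max_right _ _) hC
  have hLC : L * ‖s - x‖ ^ 2 ≤ C := by
    rcases le_total L 0 with hL | hL
    · nlinarith [sq_nonneg ‖s - x‖]
    · calc L * ‖s - x‖ ^ 2 ≤ L * diam S ^ 2 := by gcongr
        _ ≤ C := le_trans (le_max_left _ _) hC
  exact hSconv.apply_add_smul_sub_le_sub_sq_div hdiff hLip hx hs hA.le hAC (hA.trans_le hAC)
    hgap hLC

/-- Lemma 4.1 (one-step decrease under a directionally relative δ-oracle):
with stepsize `ᾱ = (G̃(x) - δ‖∇f(x)‖)₊ / C`, one Frank–Wolfe step decreases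
`f` by at least `(G̃(x) - δ‖∇f(x)‖)₊² / (2C)`. -/
theorem relative_delta_oracle_one_step_decrease {d : ℕ}
    (S : Set (EuclideanSpace ℝ (Fin d)))
    (hSne : S.Nonempty) (hScomp : IsCompact S) (hSconv : Convex ℝ S)
    (f : EuclideanSpace ℝ (Fin d) → ℝ) (L C δ : ℝ)
    (hdiff : ∀ x ∈ S, DifferentiableAt ℝ f x)
    (hLip : ∀ x ∈ S, ∀ y ∈ S, ‖gradient f x - gradient f y‖ ≤ L * ‖x - y‖)
    (hC : C ≥ max (L * (Metric.diam S) ^ 2)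
      (sSup ((fun x => ‖gradient f x‖) '' S) * Metric.diam S))
    (x s : EuclideanSpace ℝ (Fin d)) (hx : x ∈ S) (hs : s ∈ S)
    (g : EuclideanSpace ℝ (Fin d))
    (horacle : ∀ t ∈ S, |⟪gradient f x - g, t - x⟫| ≤ δ * ‖gradient f x‖)
    (hmin : ∀ t ∈ S, ⟪g, s - x⟫ ≤ ⟪g, t - x⟫) :
    f (x + (max (⟪g, x - s⟫ - δ * ‖gradient f x‖) 0 / C) • (s - x)) ≤
      f x - (max (⟪g, x - s⟫ - δ * ‖gradient f x‖) 0) ^ 2 / (2 * C) :=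
  relative_delta_oracle_one_step_decrease_general S hScomp hSconv f L C δ hdiff hLip hC x s hx hs g
    horacle
end

section
/- Let S ⊂ ℝ^d be a nonempty compact convex set with diameter D, let f : ℝ^d → ℝ have L-Lipschitz gradient on S with G := sup_{x∈S} ‖∇f(x)‖ < ∞, C ≥ max{L D², G D}, f* := inf_{x∈S} f(x), and suppose each g_δ(x^k) satisfies the directionally relative condition |⟨∇f(x^k) − g_δ(x^k), s − x^k⟩| ≤ δ ‖∇f(x^k)‖ for all s ∈ S, with iterates x^{k+1} = x^k + ᾱ_k (s^k − x^k), ᾱ_k = max{G̃(x^k) − δ‖∇f(x^k)‖, 0}/C, s^k ∈ argmin_{s∈S} ⟨g_δ(x^k), s − x^k⟩. Suppose there exists r > 0 with dist(x^k, ∂S) ≥ r for all k, and δ < r/2. Then for every K ≥ 0, min_{0 ≤ k ≤ K} G(x^k) ≤ (1/(1 − 2δ/r)) √(2C (f(x^0) − f*)/(K+1)); consequently liminf_{k→∞} G(x^k) = 0. -/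
/-!
Write `m_k = max (G̃(x^k) - δ‖∇f(x^k)‖) 0`. The oracle bound at `s^k` makes `m_k` a lower bound
for `⟪∇f(x^k), x^k - s^k⟫` whenever it is positive, and `C ≥ G D` keeps the step `m_k / C` in
`[0, 1]`; the descent lemma together with `C ≥ L D²` then gives `m_k² ≤ 2C (f(x^k) - f(x^{k+1}))`,
so `∑ m_k² ≤ 2C (f(x⁰) - f*)`. On the other side the oracle error costs at most `2δ‖∇f(x^k)‖`
in the gap, `G(x^k) ≤ m_k + 2δ‖∇f(x^k)‖`, while the interior margin gives
`r‖∇f(x^k)‖ ≤ G(x^k)`; hence `(1 - 2δ/r) G(x^k) ≤ m_k`, and both claims follow from the bound on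
`∑ m_k²`.
-/

open RealInnerProductSpace Set Filter Topology Metric Bornology

section FrankWolfeGap

variable {E : Type*} [NormedAddCommGroup E] [InnerProductSpace ℝ E] {S : Set E} {v w x s : E}

noncomputable def fwGap (S : Set E) (v x : E) : ℝ := sSup ((fun t => ⟪v, x - t⟫) '' S)

theorem bddAbove_fwGap_image (hS : IsBounded S) : BddAbove ((fun t => ⟪v, x - t⟫) '' S) := by
  obtain ⟨R, hR⟩ := hS.exists_norm_le
  refine ⟨‖v‖ * (‖x‖ + R), ?_⟩
  rintro _ ⟨t, ht, rfl⟩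
  calc ⟪v, x - t⟫ ≤ ‖v‖ * ‖x - t‖ := real_inner_le_norm _ _
    _ ≤ ‖v‖ * (‖x‖ + R) := by gcongr; exact (norm_sub_le _ _).trans (by gcongr; exact hR t ht)

theorem inner_le_fwGap (hS : IsBounded S) {t : E} (ht : t ∈ S) : ⟪v, x - t⟫ ≤ fwGap S v x :=
  le_csSup (bddAbove_fwGap_image hS) ⟨t, ht, rfl⟩

theorem fwGap_le {c : ℝ} (hS : S.Nonempty) (h : ∀ t ∈ S, ⟪v, x - t⟫ ≤ c) : fwGap S v x ≤ c :=
  csSup_le (hS.image _) (by rintro _ ⟨t, ht, rfl⟩; exact h t ht)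

theorem fwGap_nonneg (hS : IsBounded S) (hx : x ∈ S) : 0 ≤ fwGap S v x := by
  simpa using inner_le_fwGap (v := v) (x := x) hS hx

theorem fwGap_zero (hS : IsBounded S) (hx : x ∈ S) : fwGap S 0 x = 0 :=
  le_antisymm (fwGap_le ⟨x, hx⟩ fun t _ => by simp) (fwGap_nonneg hS hx)

theorem mul_norm_le_fwGap {r : ℝ} (hS : IsBounded S) (hr : 0 ≤ r) (hball : closedBall x r ⊆ S) :
    r * ‖v‖ ≤ fwGap S v x := by
  -- the boundary point `x - r • (v / ‖v‖)` of the ball (or `x` itself when `v = 0`)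
  have hmem : x - r • ‖v‖⁻¹ • v ∈ S := hball <| by
    rw [mem_closedBall, dist_eq_norm, sub_sub_cancel_left, norm_neg, norm_smul, norm_smul,
      Real.norm_of_nonneg hr, norm_inv, norm_norm]
    exact mul_le_of_le_one_right hr (inv_mul_le_one_of_le₀ le_rfl (norm_nonneg v))
  have hval : ⟪v, x - (x - r • ‖v‖⁻¹ • v)⟫ = r * ‖v‖ := by
    rw [sub_sub_cancel, real_inner_smul_right, real_inner_smul_right, real_inner_self_eq_norm_sq]
    rcases eq_or_ne ‖v‖ 0 with h | h
    · simp [h]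
    · field_simp
  exact hval ▸ inner_le_fwGap hS hmem

theorem inner_sub_sub_eq_sub_inner_sub (v w x t : E) :
    ⟪v - w, t - x⟫ = ⟪w, x - t⟫ - ⟪v, x - t⟫ := by
  rw [← neg_sub x t, inner_neg_right, inner_sub_left]
  ring

theorem fwGap_le_inner_add {ε : ℝ} (hS : S.Nonempty) (horacle : ∀ t ∈ S, |⟪v - w, t - x⟫| ≤ ε)
    (hmin : ∀ t ∈ S, ⟪w, s - x⟫ ≤ ⟪w, t - x⟫) : fwGap S v x ≤ ⟪w, x - s⟫ + ε := by
  refine fwGap_le hS fun t ht => ?_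
  have hv := (abs_le.1 (horacle t ht)).1
  have hw := hmin t ht
  rw [inner_sub_sub_eq_sub_inner_sub] at hv
  rw [← neg_sub x s, ← neg_sub x t, inner_neg_right, inner_neg_right] at hw
  linarith

theorem one_sub_two_mul_div_pos {r δ : ℝ} (hr : 0 < r) (hδ : δ < r / 2) : 0 < 1 - 2 * δ / r := by
  rw [sub_pos, div_lt_one hr]; linarith

theorem fwGap_le_of_closedBall_subset {r δ : ℝ} (hS : IsBounded S) (hr : 0 < r) (hδ : δ < r / 2)
    (hball : closedBall x r ⊆ S) (horacle : ∀ t ∈ S, |⟪v - w, t - x⟫| ≤ δ * ‖v‖)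
    (hmin : ∀ t ∈ S, ⟪w, s - x⟫ ≤ ⟪w, t - x⟫) :
    fwGap S v x ≤ 1 / (1 - 2 * δ / r) * max (⟪w, x - s⟫ - δ * ‖v‖) 0 := by
  have hx : x ∈ S := hball (mem_closedBall_self hr.le)
  have hcoef := one_sub_two_mul_div_pos hr hδ
  have hup := fwGap_le_inner_add ⟨x, hx⟩ horacle hmin
  have hδv : 2 * δ * ‖v‖ ≤ 2 * δ / r * fwGap S v x := by
    rcases le_or_gt 0 δ with hδ0 | hδ0
    · calc 2 * δ * ‖v‖ = 2 * δ / r * (r * ‖v‖) := by field_simp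
        _ ≤ 2 * δ / r * fwGap S v x := by gcongr; exact mul_norm_le_fwGap hS hr.le hball
    · -- a negative `δ` forces `v = 0` through the oracle bound at `t = x`
      have h0 : 0 ≤ δ * ‖v‖ := by simpa using horacle x hx
      have hv : v = 0 := norm_eq_zero.1 (by nlinarith [norm_nonneg v])
      simp [hv, fwGap_zero hS hx]
  rw [one_div, ← div_eq_inv_mul, le_div_iff₀ hcoef]
  nlinarith [le_max_left (⟪w, x - s⟫ - δ * ‖v‖) 0]

theorem inner_le_sSup_norm_mul_diam {F : E → E} (hS : IsBounded S)
    (hF : BddAbove ((fun y => ‖F y‖) '' S)) (hx : x ∈ S) (hs : s ∈ S) :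
    ⟪F x, x - s⟫ ≤ sSup ((fun y => ‖F y‖) '' S) * diam S :=
  calc ⟪F x, x - s⟫ ≤ ‖F x‖ * ‖x - s‖ := real_inner_le_norm _ _
    _ ≤ sSup ((fun y => ‖F y‖) '' S) * diam S := by
      rw [← dist_eq_norm]
      exact mul_le_mul (le_csSup hF ⟨x, hx, rfl⟩) (dist_le_diam_of_mem hS hx hs) dist_nonneg
        ((norm_nonneg _).trans (le_csSup hF ⟨x, hx, rfl⟩))

end FrankWolfeGap

section Lipschitz

variable {E F : Type*} [NormedAddCommGroup E] [NormedAddCommGroup F] {S : Set E} {G : E → F}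
  {L : ℝ}

theorem lipschitzOnWith_toNNReal (hLip : ∀ x ∈ S, ∀ y ∈ S, ‖G x - G y‖ ≤ L * ‖x - y‖) :
    LipschitzOnWith L.toNNReal G S :=
  LipschitzOnWith.of_dist_le_mul fun x hx y hy => by
    rw [dist_eq_norm, dist_eq_norm]
    exact (hLip x hx y hy).trans (by gcongr; exact Real.le_coe_toNNReal L)

theorem bddAbove_norm_image_of_lipschitz (hS : IsCompact S)
    (hLip : ∀ x ∈ S, ∀ y ∈ S, ‖G x - G y‖ ≤ L * ‖x - y‖) : BddAbove ((fun x => ‖G x‖) '' S) :=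
  hS.bddAbove_image (continuous_norm.comp_continuousOn (lipschitzOnWith_toNNReal hLip).continuousOn)

theorem sSup_norm_image_mul_diam_nonneg : 0 ≤ sSup ((fun x => ‖G x‖) '' S) * diam S :=
  mul_nonneg (Real.sSup_nonneg (by rintro _ ⟨y, -, rfl⟩; positivity)) diam_nonneg

theorem mul_norm_sub_sq_le_mul_diam_sq (hS : IsBounded S)
    (hLip : ∀ x ∈ S, ∀ y ∈ S, ‖G x - G y‖ ≤ L * ‖x - y‖) {x y : E} (hx : x ∈ S) (hy : y ∈ S) :
    L * ‖y - x‖ ^ 2 ≤ L * diam S ^ 2 := by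
  by_cases hS1 : S.Subsingleton
  · simp [hS1 hy hx, diam_subsingleton hS1]
  obtain ⟨a, ha, b, hb, hab⟩ := not_subsingleton_iff.1 hS1
  have hL : 0 ≤ L := by
    have hpos : 0 < ‖a - b‖ := norm_pos_iff.2 (sub_ne_zero.2 hab)
    nlinarith [hLip a ha b hb, norm_nonneg (G a - G b)]
  gcongr
  rw [← dist_eq_norm]
  exact dist_le_diam_of_mem hS hy hx

end Lipschitz

section Descent

variable {E : Type*} [NormedAddCommGroup E] [InnerProductSpace ℝ E] [CompleteSpace E]
  {S : Set E} {f : E → ℝ} {L C : ℝ} {x s : E}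

theorem Convex.descent_lemma (hS : Convex ℝ S) (hdiff : ∀ x ∈ S, DifferentiableAt ℝ f x)
    (hLip : ∀ x ∈ S, ∀ y ∈ S, ‖gradient f x - gradient f y‖ ≤ L * ‖x - y‖) {y : E}
    (hx : x ∈ S) (hy : y ∈ S) :
    f y ≤ f x + ⟪gradient f x, y - x⟫ + L / 2 * ‖y - x‖ ^ 2 := by
  set v := y - x
  have hseg : ∀ t ∈ Icc (0 : ℝ) 1, x + t • v ∈ S := fun t ht => hS.add_smul_sub_mem hx hy ht
  set φ : ℝ → ℝ := fun t => f (x + t • v) - t * ⟪gradient f x, v⟫ - L / 2 * t ^ 2 * ‖v‖ ^ 2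
  set φ' : ℝ → ℝ := fun t => ⟪gradient f (x + t • v), v⟫ - ⟪gradient f x, v⟫ - L * t * ‖v‖ ^ 2
  have hφ : ∀ t ∈ Icc (0 : ℝ) 1, HasDerivAt φ (φ' t) t := by
    intro t ht
    have hline : HasDerivAt (fun t : ℝ => x + t • v) v t := by
      simpa using ((hasDerivAt_id t).smul_const v).const_add x
    have hf := (hdiff _ (hseg t ht)).hasGradientAt.hasFDerivAt.comp_hasDerivAt t hline
    refine ((hf.sub ((hasDerivAt_id t).mul_const ⟪gradient f x, v⟫)).sub
      (((hasDerivAt_pow 2 t).const_mul (L / 2)).mul_const (‖v‖ ^ 2))).congr_deriv ?_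
    simp only [φ', InnerProductSpace.toDual_apply_apply]
    ring
  have hφ'_nonpos : ∀ t ∈ Icc (0 : ℝ) 1, φ' t ≤ 0 := by
    intro t ht
    have : ⟪gradient f (x + t • v) - gradient f x, v⟫ ≤ L * t * ‖v‖ ^ 2 :=
      calc _ ≤ ‖gradient f (x + t • v) - gradient f x‖ * ‖v‖ := real_inner_le_norm _ _
        _ ≤ L * ‖x + t • v - x‖ * ‖v‖ := by gcongr; exact hLip _ (hseg t ht) _ hx
        _ = L * t * ‖v‖ ^ 2 := by
          rw [add_sub_cancel_left, norm_smul, Real.norm_of_nonneg ht.1]; ring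
    rw [inner_sub_left] at this
    simp only [φ']
    linarith
  have hanti : AntitoneOn φ (Icc 0 1) :=
    antitoneOn_of_hasDerivWithinAt_nonpos (convex_Icc 0 1)
      (fun t ht => (hφ t ht).continuousAt.continuousWithinAt)
      (fun t ht => (hφ t (interior_subset ht)).hasDerivWithinAt)
      (fun t ht => hφ'_nonpos t (interior_subset ht))
  have := hanti (left_mem_Icc.2 zero_le_one) (right_mem_Icc.2 zero_le_one) zero_le_one
  simp only [φ, v, one_smul, add_sub_cancel, zero_smul, add_zero] at this
  linarith

theorem Convex.sq_le_of_fw_step (hS : Convex ℝ S) (hdiff : ∀ x ∈ S, DifferentiableAt ℝ f x)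
    (hLip : ∀ x ∈ S, ∀ y ∈ S, ‖gradient f x - gradient f y‖ ≤ L * ‖x - y‖)
    (hx : x ∈ S) (hs : s ∈ S) {a : ℝ} (ha : a ≤ ⟪gradient f x, x - s⟫) (haC : max a 0 ≤ C)
    (hLC : L * ‖s - x‖ ^ 2 ≤ C) :
    max a 0 ^ 2 ≤ 2 * C * (f x - f (x + (max a 0 / C) • (s - x))) := by
  set m := max a 0
  have hm0 : 0 ≤ m := le_max_right _ _
  rcases (hm0.trans haC).eq_or_lt with hC | hC
  · have : m = 0 := le_antisymm (hC ▸ haC) hm0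
    simp [this, ← hC]
  have hα : m / C ∈ Icc (0 : ℝ) 1 := ⟨div_nonneg hm0 hC.le, div_le_one_of_le₀ haC hC.le⟩
  have hdesc := hS.descent_lemma hdiff hLip hx (hS.add_smul_sub_mem hx hs hα)
  rw [add_sub_cancel_left, real_inner_smul_right, norm_smul, Real.norm_of_nonneg hα.1,
    ← neg_sub x s, inner_neg_right, neg_sub] at hdesc
  have hmm : m * m ≤ m * ⟪gradient f x, x - s⟫ := by
    rcases le_total a 0 with h | h
    · simp [m, max_eq_right h]
    · rw [show m = a from max_eq_left h]; exact mul_le_mul_of_nonneg_left ha h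
  have hquad : m ^ 2 / C * (L * ‖s - x‖ ^ 2) ≤ m ^ 2 / C * C :=
    mul_le_mul_of_nonneg_left hLC (by positivity)
  calc m ^ 2 = 2 * (m * m) - m ^ 2 / C * C := by field_simp; ring
    _ ≤ 2 * (m * ⟪gradient f x, x - s⟫) - m ^ 2 / C * (L * ‖s - x‖ ^ 2) := by linarith
    _ = 2 * C * (m / C * ⟪gradient f x, x - s⟫ - L / 2 * (m / C * ‖s - x‖) ^ 2) := by
      field_simp
    _ ≤ 2 * C * (f x - f (x + (m / C) • (s - x))) :=
      mul_le_mul_of_nonneg_left (by linarith) (by positivity)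

theorem Convex.sq_le_of_fw_step_of_le_max (hSc : IsCompact S) (hS : Convex ℝ S)
    (hdiff : ∀ x ∈ S, DifferentiableAt ℝ f x)
    (hLip : ∀ x ∈ S, ∀ y ∈ S, ‖gradient f x - gradient f y‖ ≤ L * ‖x - y‖)
    (hC : C ≥ max (L * diam S ^ 2) (sSup ((fun x => ‖gradient f x‖) '' S) * diam S))
    (hx : x ∈ S) (hs : s ∈ S) {a : ℝ} (ha : a ≤ ⟪gradient f x, x - s⟫) :
    max a 0 ^ 2 ≤ 2 * C * (f x - f (x + (max a 0 / C) • (s - x))) := by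
  have hGD : sSup ((fun x => ‖gradient f x‖) '' S) * diam S ≤ C := (le_max_right _ _).trans hC
  have hC0 : 0 ≤ C := sSup_norm_image_mul_diam_nonneg.trans hGD
  have hinner := inner_le_sSup_norm_mul_diam hSc.isBounded
    (bddAbove_norm_image_of_lipschitz hSc hLip) hx hs
  refine hS.sq_le_of_fw_step hdiff hLip hx hs ha (max_le (by linarith) hC0) ?_
  exact (mul_norm_sub_sq_le_mul_diam_sq hSc.isBounded hLip hx hs).trans ((le_max_left _ _).trans hC)

end Descent

section Sequences

open Finset

variable {u φ : ℕ → ℝ}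

theorem sum_range_le_mul_sub_of_le_mul_sub {c b : ℝ} (hc : 0 ≤ c)
    (h : ∀ k, u k ≤ c * (φ k - φ (k + 1))) (hb : ∀ k, b ≤ φ k) (K : ℕ) :
    ∑ k ∈ range K, u k ≤ c * (φ 0 - b) :=
  calc ∑ k ∈ range K, u k ≤ ∑ k ∈ range K, c * (φ k - φ (k + 1)) := sum_le_sum fun k _ => h k
    _ = c * (φ 0 - φ K) := by rw [← mul_sum, sum_range_sub']
    _ ≤ c * (φ 0 - b) := by gcongr; exact hb K

theorem exists_le_sqrt_div_of_sum_sq_le {A : ℝ} {K : ℕ} (h : ∑ k ∈ range (K + 1), u k ^ 2 ≤ A) :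
    ∃ k ≤ K, u k ≤ √(A / (K + 1)) := by
  obtain ⟨k, hk, hmin⟩ := (range (K + 1)).exists_min_image (fun k => u k ^ 2) nonempty_range_add_one
  refine ⟨k, Nat.lt_succ_iff.1 (mem_range.1 hk), (le_abs_self _).trans (Real.abs_le_sqrt ?_)⟩
  rw [le_div_iff₀ (by positivity)]
  calc u k ^ 2 * (K + 1) = ∑ _j ∈ range (K + 1), u k ^ 2 := by simp [mul_comm]
    _ ≤ ∑ j ∈ range (K + 1), u j ^ 2 := sum_le_sum hmin
    _ ≤ A := h

theorem tendsto_zero_of_sum_sq_le {A : ℝ} (h : ∀ K, ∑ k ∈ range K, u k ^ 2 ≤ A) :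
    Tendsto u atTop (𝓝 0) := by
  have hsq := (summable_of_sum_range_le (fun k => sq_nonneg (u k)) h).tendsto_atTop_zero
  have habs : Tendsto (fun k => |u k|) atTop (𝓝 0) := by
    simpa [Real.sqrt_sq_eq_abs] using hsq.sqrt
  exact tendsto_zero_iff_abs_tendsto_zero u |>.2 habs

end Sequences

theorem relative_delta_oracle_margin_rate_general {d : ℕ}
    (S : Set (EuclideanSpace ℝ (Fin d)))
    (hScomp : IsCompact S) (hSconv : Convex ℝ S)
    (f : EuclideanSpace ℝ (Fin d) → ℝ) (L C δ : ℝ)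
    (hdiff : ∀ x ∈ S, DifferentiableAt ℝ f x)
    (hLip : ∀ x ∈ S, ∀ y ∈ S, ‖gradient f x - gradient f y‖ ≤ L * ‖x - y‖)
    (hC : C ≥ max (L * (Metric.diam S) ^ 2)
      (sSup ((fun x => ‖gradient f x‖) '' S) * Metric.diam S))
    (x s g : ℕ → EuclideanSpace ℝ (Fin d))
    (horacle : ∀ k, ∀ t ∈ S,
      |⟪gradient f (x k) - g k, t - x k⟫| ≤ δ * ‖gradient f (x k)‖)
    (hsS : ∀ k, s k ∈ S)
    (hmin : ∀ k, ∀ t ∈ S, ⟪g k, s k - x k⟫ ≤ ⟪g k, t - x k⟫)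
    (hupd : ∀ k, x (k + 1) = x k +
      (max (⟪g k, x k - s k⟫ - δ * ‖gradient f (x k)‖) 0 / C) • (s k - x k))
    (r : ℝ) (hr : 0 < r)
    (hmargin : ∀ k, Metric.closedBall (x k) r ⊆ S)
    (hδr : δ < r / 2) :
    (∀ K : ℕ, ∃ k ≤ K,
      sSup ((fun t => ⟪gradient f (x k), x k - t⟫) '' S) ≤
        (1 / (1 - 2 * δ / r)) *
          Real.sqrt (2 * C * (f (x 0) - sInf (f '' S)) / (K + 1))) ∧
    Filter.liminf
      (fun k => sSup ((fun t => ⟪gradient f (x k), x k - t⟫) '' S))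
      Filter.atTop = 0 := by
  set m : ℕ → ℝ := fun k => max (⟪g k, x k - s k⟫ - δ * ‖gradient f (x k)‖) 0
  have hxS : ∀ k, x k ∈ S := fun k => hmargin k (mem_closedBall_self hr.le)
  have hgap : ∀ k, fwGap S (gradient f (x k)) (x k) ≤ 1 / (1 - 2 * δ / r) * m k := fun k =>
    fwGap_le_of_closedBall_subset hScomp.isBounded hr hδr (hmargin k) (horacle k) (hmin k)
  have hdecr : ∀ k, m k ^ 2 ≤ 2 * C * (f (x k) - f (x (k + 1))) := fun k => by
    have ha := (abs_le.1 (horacle k (s k) (hsS k))).2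
    rw [inner_sub_sub_eq_sub_inner_sub] at ha
    rw [hupd k]
    exact hSconv.sq_le_of_fw_step_of_le_max hScomp hdiff hLip hC (hxS k) (hsS k) (by linarith)
  have hC0 : 0 ≤ C := sSup_norm_image_mul_diam_nonneg.trans ((le_max_right _ _).trans hC)
  have hfS : ∀ k, sInf (f '' S) ≤ f (x k) := fun k =>
    csInf_le (hScomp.bddBelow_image fun y hy => (hdiff y hy).continuousAt.continuousWithinAt)
      ⟨x k, hxS k, rfl⟩
  have hsum := sum_range_le_mul_sub_of_le_mul_sub (mul_nonneg zero_le_two hC0) hdecr hfS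
  have hcoef : 0 ≤ 1 / (1 - 2 * δ / r) := (one_div_pos.2 (one_sub_two_mul_div_pos hr hδr)).le
  refine ⟨fun K => ?_, ?_⟩
  · obtain ⟨k, hk, hmk⟩ := exists_le_sqrt_div_of_sum_sq_le (hsum (K + 1))
    exact ⟨k, hk, (hgap k).trans (by gcongr)⟩
  · have hlim : Tendsto (fun k => fwGap S (gradient f (x k)) (x k)) atTop (𝓝 0) :=
      squeeze_zero (fun k => fwGap_nonneg hScomp.isBounded (hxS k)) hgap
        (by simpa using (tendsto_zero_of_sum_sq_le hsum).const_mul (1 / (1 - 2 * δ / r)))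
    exact hlim.liminf_eq

/-- Corollary 4.3 (residual-free rate under an interior margin): if all
iterates stay at distance at least `r` from the boundary of `S` and `δ < r/2`,
then `min_{0≤k≤K} G(x^k) ≤ (1 - 2δ/r)⁻¹ √(2C (f(x⁰) - f*)/(K+1))`, and
consequently `liminf_k G(x^k) = 0`. -/
theorem relative_delta_oracle_margin_rate {d : ℕ}
    (S : Set (EuclideanSpace ℝ (Fin d)))
    (hSne : S.Nonempty) (hScomp : IsCompact S) (hSconv : Convex ℝ S)
    (f : EuclideanSpace ℝ (Fin d) → ℝ) (L C δ : ℝ)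
    (hdiff : ∀ x ∈ S, DifferentiableAt ℝ f x)
    (hLip : ∀ x ∈ S, ∀ y ∈ S, ‖gradient f x - gradient f y‖ ≤ L * ‖x - y‖)
    (hC : C ≥ max (L * (Metric.diam S) ^ 2)
      (sSup ((fun x => ‖gradient f x‖) '' S) * Metric.diam S))
    (x s g : ℕ → EuclideanSpace ℝ (Fin d))
    (hx0 : x 0 ∈ S)
    (horacle : ∀ k, ∀ t ∈ S,
      |⟪gradient f (x k) - g k, t - x k⟫| ≤ δ * ‖gradient f (x k)‖)
    (hsS : ∀ k, s k ∈ S)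
    (hmin : ∀ k, ∀ t ∈ S, ⟪g k, s k - x k⟫ ≤ ⟪g k, t - x k⟫)
    (hupd : ∀ k, x (k + 1) = x k +
      (max (⟪g k, x k - s k⟫ - δ * ‖gradient f (x k)‖) 0 / C) • (s k - x k))
    (r : ℝ) (hr : 0 < r)
    (hmargin : ∀ k, Metric.closedBall (x k) r ⊆ S)
    (hδr : δ < r / 2) :
    (∀ K : ℕ, ∃ k ≤ K,
      sSup ((fun t => ⟪gradient f (x k), x k - t⟫) '' S) ≤
        (1 / (1 - 2 * δ / r)) *
          Real.sqrt (2 * C * (f (x 0) - sInf (f '' S)) / (K + 1))) ∧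
    Filter.liminf
      (fun k => sSup ((fun t => ⟪gradient f (x k), x k - t⟫) '' S))
      Filter.atTop = 0 :=
  relative_delta_oracle_margin_rate_general S hScomp hSconv f L C δ hdiff hLip hC x s g horacle hsS
    hmin hupd r hr hmargin hδr
end
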